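/- Degree reduction by shortcutting preserves connectivity and cost: let X be a connected multigraph with all degrees even, let ρ(v) ≤ deg_X(v) be even targets with ρ(v) ≥ 2 for all v in the support. Then there exists a multigraph X' on the same vertex set with deg_{X'}(v) = ρ(v) for every v, X' connected, and cost(X') ≤ cost(X), assuming the cost function is symmetric, nonnegative, and satisfies the triangle inequality. -/

import Mathlib

open Finset

noncomputable section

variable {V : Type*}

/-- Degree of `v` in a multigraph given by a multiset of (possibly diagonal) `Sym2` edges;
self-loops count twice. -/
def mdeg [DecidableEq V] (E : Multiset (Sym2 V)) (v : V) : ℕ :=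
  (E.map (Sym2.lift ⟨fun a b => (if a = v then 1 else 0) + (if b = v then 1 else 0),
    fun _ _ => add_comm _ _⟩)).sum

/-- Cost of a multigraph: multiplicity-weighted sum of (symmetrized) edge costs. -/
def mcost (c : V → V → ℝ) (E : Multiset (Sym2 V)) : ℝ :=
  (E.map (Sym2.lift ⟨fun a b => (c a b + c b a) / 2, fun _ _ => by ring⟩)).sum

/-- The edge multiset of the closed walk visiting the vertices of `w` in cyclic order.
A singleton list yields one self-loop. -/
def walkEdges (w : List V) : Multiset (Sym2 V) :=
  (((w.zip (w.rotate 1)).map (fun p : V × V => Sym2.mk p.1 p.2) : List (Sym2 V)) : Multiset (Sym2 V))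

/-- Connectivity of a multigraph on its support. -/
def connOn [DecidableEq V] (E : Multiset (Sym2 V)) : Prop :=
  ∀ u v, 0 < mdeg E u → 0 < mdeg E v →
    Relation.ReflTransGen (fun a b => s(a, b) ∈ E) u v

section Helpers

variable [DecidableEq V]

/-- Contribution of an edge to the degree of `v`. -/
def dct (v : V) : Sym2 V → ℕ :=
  Sym2.lift ⟨fun a b => (if a = v then 1 else 0) + (if b = v then 1 else 0),
    fun _ _ => add_comm _ _⟩

lemma mdeg_def (E : Multiset (Sym2 V)) (v : V) : mdeg E v = (E.map (dct v)).sum := rfl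

lemma dct_mk (v a b : V) :
    dct v s(a, b) = (if a = v then 1 else 0) + (if b = v then 1 else 0) := rfl

lemma mdeg_cons (e : Sym2 V) (E : Multiset (Sym2 V)) (v : V) :
    mdeg (e ::ₘ E) v = dct v e + mdeg E v := by
  simp [mdeg_def, dct]

/-- Symmetrized cost of a single edge. -/
def cc (c : V → V → ℝ) : Sym2 V → ℝ :=
  Sym2.lift ⟨fun a b => (c a b + c b a) / 2, fun _ _ => by ring⟩

lemma mcost_def (c : V → V → ℝ) (E : Multiset (Sym2 V)) : mcost c E = (E.map (cc c)).sum := rfl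

lemma cc_mk (c : V → V → ℝ) (a b : V) : cc c s(a, b) = (c a b + c b a) / 2 := rfl

lemma mcost_cons (c : V → V → ℝ) (e : Sym2 V) (E : Multiset (Sym2 V)) :
    mcost c (e ::ₘ E) = cc c e + mcost c E := by
  simp [mcost_def, cc]

lemma reachE_symm {E : Multiset (Sym2 V)} {a b : V}
    (h : Relation.ReflTransGen (fun x y => s(x, y) ∈ E) a b) :
    Relation.ReflTransGen (fun x y => s(x, y) ∈ E) b a :=
  (@Relation.ReflTransGen.stdSymm _ _ ⟨fun x y hxy => by rw [Sym2.eq_swap]; exact hxy⟩).symm _ _ h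

lemma reach_lift {E E' : Multiset (Sym2 V)}
    (h : ∀ a b : V, s(a, b) ∈ E → Relation.ReflTransGen (fun x y => s(x, y) ∈ E') a b)
    {a b : V} (hab : Relation.ReflTransGen (fun x y => s(x, y) ∈ E) a b) :
    Relation.ReflTransGen (fun x y => s(x, y) ∈ E') a b := by
  induction hab with
  | refl => exact .refl
  | tail _ hstep ih => exact ih.trans (h _ _ hstep)

lemma exists_incident {E : Multiset (Sym2 V)} {v : V} (h : 0 < mdeg E v) :
    ∃ u, s(v, u) ∈ E := by
  by_contra hc
  push_neg at hc
  have h0 : ∀ e ∈ E, dct v e = 0 := by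
    intro e he
    revert he
    induction e using Sym2.inductionOn with
    | _ a b =>
      intro he
      have ha : a ≠ v := by
        rintro rfl
        exact hc b he
      have hb : b ≠ v := by
        rintro rfl
        rw [Sym2.eq_swap] at he
        exact hc a he
      simp [dct_mk, ha, hb]
  have : mdeg E v = 0 := by
    rw [mdeg_def]
    apply Multiset.sum_eq_zero
    intro x hx
    obtain ⟨e, he, rfl⟩ := Multiset.mem_map.mp hx
    exact h0 e he
  omega

lemma mdeg_erase {E : Multiset (Sym2 V)} {e : Sym2 V} (h : e ∈ E) (x : V) :
    mdeg (E.erase e) x + dct x e = mdeg E x := by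
  conv_rhs => rw [← Multiset.cons_erase h]
  rw [mdeg_cons]
  omega

lemma multiset_even_sum {s : Multiset ℕ} (h : ∀ x ∈ s, Even x) : Even s.sum := by
  induction s using Multiset.induction_on with
  | empty => simp
  | cons a s ih =>
    rw [Multiset.sum_cons]
    exact (h a (Multiset.mem_cons_self _ _)).add (ih fun x hx => h x (Multiset.mem_cons_of_mem hx))

/-- Parity argument: if all degrees are even and there is no loop at `v`, then for any edge
`s(v,u) ∈ E` there is another edge `s(v,u₃)` (in `E` minus this copy of `s(v,u)`) whose other
endpoint `u₃` is reachable from `u` avoiding `v`. -/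
lemma exists_partner [Fintype V] {E : Multiset (Sym2 V)} {v u : V}
    (heven : ∀ x, Even (mdeg E x)) (hloop : s(v, v) ∉ E) (he1 : s(v, u) ∈ E) :
    ∃ u3, s(v, u3) ∈ E.erase s(v, u) ∧
      Relation.ReflTransGen (fun a b => s(a, b) ∈ E ∧ v ∉ s(a, b)) u u3 := by
  classical
  set Rch : V → Prop := Relation.ReflTransGen (fun a b => s(a, b) ∈ E ∧ v ∉ s(a, b)) u with hRchdef
  have huv : u ≠ v := by
    rintro rfl
    exact hloop (by rwa [Sym2.eq_swap] at he1)
  have hvC : ¬ Rch v := by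
    intro h
    rcases Relation.ReflTransGen.cases_tail h with h' | ⟨c, _, hcv, hnv⟩
    · exact huv h'.symm
    · exact hnv (Sym2.mem_mk_right c v)
  set g : Sym2 V → ℕ := Sym2.lift ⟨fun a b => (if Rch a then 1 else 0) + (if Rch b then 1 else 0),
    fun _ _ => add_comm _ _⟩ with hgdef
  have gmk : ∀ a b : V, g s(a, b) = (if Rch a then 1 else 0) + (if Rch b then 1 else 0) :=
    fun _ _ => rfl
  set C : Finset V := Finset.univ.filter (fun x => Rch x) with hCdef
  have key : ∀ M : Multiset (Sym2 V), (M.map g).sum = ∑ x ∈ C, mdeg M x := by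
    intro M
    induction M using Multiset.induction_on with
    | empty => simp [mdeg_def]
    | cons e M ih =>
      rw [Multiset.map_cons, Multiset.sum_cons, ih]
      have hsing : g e = ∑ x ∈ C, dct x e := by
        induction e using Sym2.inductionOn with
        | _ a b =>
          rw [gmk]
          have : ∀ y : V, (∑ x ∈ C, if y = x then 1 else 0) = if Rch y then 1 else 0 := by
            intro y
            rw [Finset.sum_ite_eq C y (fun _ => 1)]
            simp [hCdef]
          calc (if Rch a then 1 else 0) + (if Rch b then 1 else 0)
              = (∑ x ∈ C, if a = x then 1 else 0) + (∑ x ∈ C, if b = x then 1 else 0) := by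
                rw [this a, this b]
            _ = ∑ x ∈ C, dct x s(a, b) := by
                rw [← Finset.sum_add_distrib]
                rfl
      rw [hsing, ← Finset.sum_add_distrib]
      apply Finset.sum_congr rfl
      intro x _
      rw [mdeg_cons]
  have htotal : Even ((E.map g).sum) := by
    rw [key]
    exact Finset.even_sum _ (fun x _ => heven x)
  have hsplit := Multiset.filter_add_not (fun e => v ∈ e) E
  have hsum : ((E.filter (fun e => v ∈ e)).map g).sum
      + ((E.filter (fun e => ¬ v ∈ e)).map g).sum = (E.map g).sum := by
    conv_rhs => rw [← hsplit]
    rw [Multiset.map_add, Multiset.sum_add]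
  have hReven : Even (((E.filter (fun e => ¬ v ∈ e)).map g).sum) := by
    apply multiset_even_sum
    intro x hx
    obtain ⟨e, he, rfl⟩ := Multiset.mem_map.mp hx
    rw [Multiset.mem_filter] at he
    obtain ⟨heE, hnv⟩ := he
    revert heE hnv
    induction e using Sym2.inductionOn with
    | _ a b =>
      intro heE hnv
      have hiff : Rch a ↔ Rch b := by
        constructor
        · intro h; exact h.tail ⟨heE, hnv⟩
        · intro h
          refine h.tail ⟨?_, ?_⟩
          · rwa [Sym2.eq_swap]
          · rwa [Sym2.eq_swap]
      rw [gmk]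
      by_cases h : Rch a
      · simp [h, hiff.mp h]
      · have hb' : ¬Rch b := fun hb => h (hiff.mpr hb)
        simp [h, hb']
  have hSeven : Even (((E.filter (fun e => v ∈ e)).map g).sum) := by
    rcases Nat.even_add.mp (hsum ▸ htotal) with h
    exact h.mpr hReven
  have he1S : s(v, u) ∈ E.filter (fun e => v ∈ e) :=
    Multiset.mem_filter.mpr ⟨he1, Sym2.mem_mk_left v u⟩
  have hconsS : s(v, u) ::ₘ (E.filter (fun e => v ∈ e)).erase s(v, u)
      = E.filter (fun e => v ∈ e) := Multiset.cons_erase he1S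
  have hg1 : g s(v, u) = 1 := by
    rw [gmk]
    simp [hvC, show Rch u from Relation.ReflTransGen.refl]
  have hrest : 0 < (((E.filter (fun e => v ∈ e)).erase s(v, u)).map g).sum := by
    have : ((E.filter (fun e => v ∈ e)).map g).sum
        = 1 + (((E.filter (fun e => v ∈ e)).erase s(v, u)).map g).sum := by
      conv_lhs => rw [← hconsS]
      rw [Multiset.map_cons, Multiset.sum_cons, hg1]
    rcases hSeven with ⟨k, hk⟩
    omega
  have hex : ∃ e ∈ (E.filter (fun e => v ∈ e)).erase s(v, u), g e ≠ 0 := by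
    by_contra hc
    push_neg at hc
    have : (((E.filter (fun e => v ∈ e)).erase s(v, u)).map g).sum = 0 := by
      apply Multiset.sum_eq_zero
      intro x hx
      obtain ⟨e, he, rfl⟩ := Multiset.mem_map.mp hx
      exact hc e he
    omega
  obtain ⟨e3, he3, hg3⟩ := hex
  have he3S : e3 ∈ E.filter (fun e => v ∈ e) := Multiset.mem_of_mem_erase he3
  have hve3 : v ∈ e3 := (Multiset.mem_filter.mp he3S).2
  obtain ⟨u3, rfl⟩ := Sym2.mem_iff_exists.mp hve3
  refine ⟨u3, ?_, ?_⟩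
  · exact Multiset.mem_of_le (Multiset.erase_le_erase _ (Multiset.filter_le _ E)) he3
  · rw [gmk] at hg3
    simp only [hvC, if_false, zero_add] at hg3
    by_cases h : Rch u3
    · exact h
    · simp [h] at hg3

/-- One shortcut step: reduce the degree of `v` by 2, keeping everything else. -/
lemma shortcut_step [Fintype V] (c : V → V → ℝ) (E : Multiset (Sym2 V)) (v : V)
    (hsymm : ∀ u v, c u v = c v u)
    (hnonneg : ∀ u v, 0 ≤ c u v)
    (htri : ∀ u v w, c u w ≤ c u v + c v w)
    (heven : ∀ x, Even (mdeg E x)) (hconn : connOn E)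
    (h4 : 4 ≤ mdeg E v) :
    ∃ E' : Multiset (Sym2 V), E'.card + 1 = Multiset.card E ∧ mdeg E' v + 2 = mdeg E v ∧
      (∀ x, x ≠ v → mdeg E' x = mdeg E x) ∧ connOn E' ∧ mcost c E' ≤ mcost c E := by
  classical
  by_cases hloop : s(v, v) ∈ E
  · -- remove a loop at v
    set F := E.erase s(v, v) with hFdef
    have hE : s(v, v) ::ₘ F = E := Multiset.cons_erase hloop
    have hdeg : ∀ x, mdeg E x = dct x s(v, v) + mdeg F x := by
      intro x
      conv_lhs => rw [← hE]
      rw [mdeg_cons]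
    refine ⟨F, ?_, ?_, ?_, ?_, ?_⟩
    · rw [← hE, Multiset.card_cons]
    · have d : dct v s(v, v) = 2 := by simp [dct_mk]
      rw [hdeg v, d]
      omega
    · intro x hx
      have hvx : v ≠ x := fun h => hx h.symm
      have d : dct x s(v, v) = 0 := by simp [dct_mk, hvx]
      rw [hdeg x, d]
      omega
    · intro a b ha hb
      have ha' : 0 < mdeg E a := by rw [hdeg a]; omega
      have hb' : 0 < mdeg E b := by rw [hdeg b]; omega
      refine reach_lift ?_ (hconn a b ha' hb')
      intro x y hxy
      rw [← hE, Multiset.mem_cons] at hxy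
      rcases hxy with h | h
      · rcases Sym2.eq_iff.mp h with ⟨rfl, rfl⟩ | ⟨rfl, rfl⟩ <;> exact .refl
      · exact Relation.ReflTransGen.single h
    · conv_rhs => rw [← hE]
      rw [mcost_cons, cc_mk]
      have := hnonneg v v
      linarith
  · -- no loop at v: shortcut two incident edges
    have hpos : 0 < mdeg E v := by omega
    obtain ⟨u, he1⟩ := exists_incident hpos
    have hu : u ≠ v := by
      rintro rfl
      exact hloop he1
    obtain ⟨u3, he3, hRch⟩ := exists_partner heven hloop he1
    have hu3 : u3 ≠ v := by
      rintro rfl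
      exact hloop (Multiset.mem_of_mem_erase he3)
    -- degree bookkeeping to find e2
    have hd1 : mdeg (E.erase s(v, u)) v + 1 = mdeg E v := by
      have := mdeg_erase he1 v
      rw [dct_mk] at this
      simp [hu] at this
      omega
    have hd2 : mdeg ((E.erase s(v, u)).erase s(v, u3)) v + 1 = mdeg (E.erase s(v, u)) v := by
      have := mdeg_erase he3 v
      rw [dct_mk] at this
      simp [hu3] at this
      omega
    obtain ⟨w, he2G⟩ := exists_incident (E := (E.erase s(v, u)).erase s(v, u3)) (v := v)
      (by omega)
    have he2 : s(v, w) ∈ E.erase s(v, u) := Multiset.mem_of_mem_erase he2G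
    have hw : w ≠ v := by
      rintro rfl
      exact hloop (Multiset.mem_of_mem_erase he2)
    set F := (E.erase s(v, u)).erase s(v, w) with hFdef
    have he3F : s(v, u3) ∈ F := by
      by_cases hab : s(v, w) = s(v, u3)
      · rw [hFdef, hab]
        rwa [hab] at he2G
      · rw [hFdef]
        exact (Multiset.mem_erase_of_ne (fun h => hab h.symm)).mpr he3
    have hE : s(v, u) ::ₘ s(v, w) ::ₘ F = E := by
      rw [hFdef, Multiset.cons_erase he2, Multiset.cons_erase he1]
    set E' : Multiset (Sym2 V) := s(u, w) ::ₘ F with hE'def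
    have hdegE : ∀ x, mdeg E x = dct x s(v, u) + dct x s(v, w) + mdeg F x := by
      intro x
      conv_lhs => rw [← hE]
      rw [mdeg_cons, mdeg_cons]
      omega
    have hdegE' : ∀ x, mdeg E' x = dct x s(u, w) + mdeg F x := fun x => mdeg_cons _ _ _
    have d1v : dct v s(v, u) = 1 := by simp [dct_mk, hu]
    have d2v : dct v s(v, w) = 1 := by simp [dct_mk, hw]
    have d3v : dct v s(u, w) = 0 := by simp [dct_mk, hu, hw]
    have hdv : mdeg E' v + 2 = mdeg E v := by
      rw [hdegE v, hdegE' v, d1v, d2v, d3v]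
      omega
    have hdx : ∀ x, x ≠ v → mdeg E' x = mdeg E x := by
      intro x hx
      have hvx : v ≠ x := fun h => hx h.symm
      have d1 : dct x s(v, u) = (if u = x then 1 else 0) := by simp [dct_mk, hvx]
      have d2 : dct x s(v, w) = (if w = x then 1 else 0) := by simp [dct_mk, hvx]
      have d3 : dct x s(u, w) = (if u = x then 1 else 0) + (if w = x then 1 else 0) := rfl
      rw [hdegE x, hdegE' x, d1, d2, d3]
    -- connectivity preliminaries
    have hFstep : ∀ a b : V, s(a, b) ∈ E → v ∉ s(a, b) → s(a, b) ∈ F := by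
      intro a b hab hnv
      rw [← hE, Multiset.mem_cons, Multiset.mem_cons] at hab
      rcases hab with h | h | h
      · exact absurd (h ▸ Sym2.mem_mk_left v u) hnv
      · exact absurd (h ▸ Sym2.mem_mk_left v w) hnv
      · exact h
    have hvu : Relation.ReflTransGen (fun x y => s(x, y) ∈ E') v u := by
      have step1 : Relation.ReflTransGen (fun x y => s(x, y) ∈ E') v u3 :=
        Relation.ReflTransGen.single (Multiset.mem_cons_of_mem he3F)
      have step2 : Relation.ReflTransGen (fun x y => s(x, y) ∈ E') u3 u := by
        have hsymRel : Symmetric (fun a b : V => s(a, b) ∈ E ∧ v ∉ s(a, b)) := by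
          intro x y ⟨h1, h2⟩
          constructor
          · rwa [Sym2.eq_swap]
          · rwa [Sym2.eq_swap]
        have h1 : Relation.ReflTransGen (fun a b : V => s(a, b) ∈ E ∧ v ∉ s(a, b)) u3 u :=
          (@Relation.ReflTransGen.stdSymm _ _ ⟨fun _ _ h => hsymRel h⟩).symm _ _ hRch
        refine Relation.ReflTransGen.mono ?_ _ _ h1
        intro a b ⟨hab, hnv⟩
        exact Multiset.mem_cons_of_mem (hFstep a b hab hnv)
      exact step1.trans step2
    have hvw : Relation.ReflTransGen (fun x y => s(x, y) ∈ E') v w :=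
      hvu.tail (Multiset.mem_cons_self _ _)
    refine ⟨E', ?_, ?_, ?_, ?_, ?_⟩
    · rw [← hE, hE'def]
      simp
    · exact hdv
    · exact hdx
    · intro a b ha hb
      have htrans : ∀ x, 0 < mdeg E' x → 0 < mdeg E x := by
        intro x hx
        by_cases h : x = v
        · subst h; omega
        · rw [← hdx x h]; exact hx
      refine reach_lift ?_ (hconn a b (htrans a ha) (htrans b hb))
      intro x y hxy
      rw [← hE, Multiset.mem_cons, Multiset.mem_cons] at hxy
      rcases hxy with h | h | h
      · rcases Sym2.eq_iff.mp h with ⟨rfl, rfl⟩ | ⟨rfl, rfl⟩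
        · exact hvu
        · exact reachE_symm hvu
      · rcases Sym2.eq_iff.mp h with ⟨rfl, rfl⟩ | ⟨rfl, rfl⟩
        · exact hvw
        · exact reachE_symm hvw
      · exact Relation.ReflTransGen.single (Multiset.mem_cons_of_mem h)
    · rw [← hE, hE'def, mcost_cons, mcost_cons, mcost_cons, cc_mk, cc_mk, cc_mk]
      have h1 := htri u v w
      have h2 := hsymm u v
      have h3 := hsymm v w
      have h4 := hsymm u w
      linarith

lemma shortcut_aux [Fintype V] (c : V → V → ℝ)
    (hsymm : ∀ u v, c u v = c v u)
    (hnonneg : ∀ u v, 0 ≤ c u v)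
    (htri : ∀ u v w, c u w ≤ c u v + c v w) :
    ∀ (n : ℕ) (E : Multiset (Sym2 V)) (ρ : V → ℕ), Multiset.card E ≤ n →
      (∀ v, Even (mdeg E v)) → connOn E → (∀ v, Even (ρ v)) → (∀ v, ρ v ≤ mdeg E v) →
      (∀ v, 0 < mdeg E v → 2 ≤ ρ v) →
      ∃ E' : Multiset (Sym2 V),
        (∀ v, mdeg E' v = ρ v) ∧ connOn E' ∧ mcost c E' ≤ mcost c E := by
  intro n
  induction n with
  | zero =>
    intro E ρ hcard heven hconn hρeven hρle hρ2
    have hE0 : E = 0 := Multiset.card_eq_zero.mp (Nat.le_zero.mp hcard)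
    subst hE0
    refine ⟨0, ?_, ?_, le_refl _⟩
    · intro x
      have := hρle x
      have h0 : mdeg (0 : Multiset (Sym2 V)) x = 0 := rfl
      omega
    · intro a b ha _
      have h0 : mdeg (0 : Multiset (Sym2 V)) a = 0 := rfl
      omega
  | succ n ih =>
    intro E ρ hcard heven hconn hρeven hρle hρ2
    by_cases hall : ∀ x, mdeg E x = ρ x
    · exact ⟨E, hall, hconn, le_refl _⟩
    · push_neg at hall
      obtain ⟨v, hv⟩ := hall
      have hlt : ρ v < mdeg E v := lt_of_le_of_ne (hρle v) (Ne.symm hv)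
      have h2ρ : 2 ≤ ρ v := hρ2 v (by omega)
      have h4 : 4 ≤ mdeg E v := by
        obtain ⟨k, hk⟩ := heven v
        obtain ⟨m, hm⟩ := hρeven v
        omega
      obtain ⟨E', hcard', hdegv, hdeg, hconn', hcost'⟩ :=
        shortcut_step c E v hsymm hnonneg htri heven hconn h4
      have hevens : ∀ x, Even (mdeg E' x) := by
        intro x
        by_cases hx : x = v
        · subst hx
          obtain ⟨k, hk⟩ := heven x
          exact ⟨k - 1, by omega⟩
        · rw [hdeg x hx]; exact heven x
      have hles : ∀ x, ρ x ≤ mdeg E' x := by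
        intro x
        by_cases hx : x = v
        · subst hx
          obtain ⟨k, hk⟩ := heven x
          obtain ⟨m, hm⟩ := hρeven x
          omega
        · rw [hdeg x hx]; exact hρle x
      have htwos : ∀ x, 0 < mdeg E' x → 2 ≤ ρ x := by
        intro x hx
        by_cases hxv : x = v
        · subst hxv; exact hρ2 x (by omega)
        · exact hρ2 x (by rw [← hdeg x hxv]; omega)
      obtain ⟨E'', h1, h2, h3⟩ := ih E' ρ (by omega) hevens hconn' hρeven hles htwos
      exact ⟨E'', h1, h2, h3.trans hcost'⟩

end Helpers

/-- Shortcutting a connected even-degree multigraph down to even degree targets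
`ρ(v) ≤ deg(v)` with `ρ(v) ≥ 2` on the support preserves connectivity and does not increase
the cost, assuming symmetric nonnegative costs satisfying the triangle inequality. -/
theorem shortcut_to_degree_targets [Fintype V] [DecidableEq V]
    (c : V → V → ℝ) (E : Multiset (Sym2 V)) (ρ : V → ℕ)
    (hsymm : ∀ u v, c u v = c v u)
    (hnonneg : ∀ u v, 0 ≤ c u v)
    (htri : ∀ u v w, c u w ≤ c u v + c v w)
    (heven : ∀ v, Even (mdeg E v))
    (hconn : connOn E)
    (hρeven : ∀ v, Even (ρ v))
    (hρle : ∀ v, ρ v ≤ mdeg E v)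
    (hρ2 : ∀ v, 0 < mdeg E v → 2 ≤ ρ v) :
    ∃ E' : Multiset (Sym2 V),
      (∀ v, mdeg E' v = ρ v) ∧ connOn E' ∧ mcost c E' ≤ mcost c E :=
  shortcut_aux c hsymm hnonneg htri (Multiset.card E) E ρ le_rfl heven hconn hρeven hρle hρ2
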